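/- Let E(ρ) = Σ_j M_j ρ M_j† be the channel of a Kraus family on ℂ^d. Then E(uρu†) = u E(ρ) u† for every diagonal unitary u and every d×d matrix ρ (E is covariant under the group N of diagonal unitaries) if and only if E admits a Kraus representation in which every Kraus operator is either a diagonal matrix or of the form b·|x⟩⟨x'| for some b ∈ ℂ and indices x ≠ x'. -/

import Mathlib

/-!
Write `E ρ a b = ∑ x y, ρ x y * C a x b y` with `C a x b y = ∑ j, M j a x * conj (M j b y)`, the
Choi matrix of the channel; `C` determines both `E` and `∑ j, (M j)ᴴ * M j`. Conjugating by a
diagonal unitary `diagonal f` multiplies `C a x b y` by `f x * conj (f y)` on one side and by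
`f a * conj (f b)` on the other, so `E` is covariant iff `C` vanishes outside the index patterns
`a = x ∧ b = y` and `x = y ∧ a = b`. On that support `C` is also the Choi matrix of the family
made of the diagonals of the `M j` together with each of their off-diagonal entries separately,
and any family of diagonal matrices and matrix units is covariant.
-/

open Matrix Complex

namespace Kraus

variable {R n ι κ : Type*}

section Zero

variable [Zero R]

def IsCovariantCoeff (C : n → n → n → n → R) : Prop :=
  ∀ a x b y, C a x b y ≠ 0 → (a = x ∧ b = y) ∨ (x = y ∧ a = b)

def covariantKraus [DecidableEq n] (M : ι → Matrix n n R) : ι ⊕ ι × n × n → Matrix n n R :=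
  Sum.elim (fun j => diagonal (M j).diag)
    fun p => single p.2.1 p.2.2 (if p.2.1 = p.2.2 then 0 else M p.1 p.2.1 p.2.2)

theorem covariantKraus_isDiag_or_single [DecidableEq n] (M : ι → Matrix n n R)
    (k : ι ⊕ ι × n × n) : (covariantKraus M k).IsDiag ∨
      ∃ (c : R) (x y : n), x ≠ y ∧ covariantKraus M k = single x y c := by
  rcases k with j | ⟨j, x, y⟩
  · exact .inl (isDiag_diagonal _)
  · by_cases hxy : x = y
    · left
      simp [covariantKraus, hxy, isDiag_zero]
    · exact .inr ⟨M j x y, x, y, hxy, by simp [covariantKraus, hxy]⟩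

end Zero

section CommSemiring

variable [CommSemiring R] [StarRing R] [Fintype ι] [Fintype κ]

def krausMap [Fintype n] (M : ι → Matrix n n R) (ρ : Matrix n n R) : Matrix n n R :=
  ∑ j, M j * ρ * (M j)ᴴ

def krausCoeff (M : ι → Matrix n n R) (a x b y : n) : R :=
  ∑ j, M j a x * star (M j b y)

theorem mul_mul_conjTranspose_apply [Fintype n] (A B ρ : Matrix n n R) (a b : n) :
    (A * ρ * Bᴴ) a b = ∑ x, ∑ y, A a x * ρ x y * star (B b y) := by
  simp only [mul_apply, conjTranspose_apply, Finset.sum_mul]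
  exact Finset.sum_comm

theorem krausMap_apply [Fintype n] (M : ι → Matrix n n R) (ρ : Matrix n n R) (a b : n) :
    krausMap M ρ a b = ∑ x, ∑ y, ρ x y * krausCoeff M a x b y := by
  simp only [krausMap, krausCoeff, Matrix.sum_apply, mul_mul_conjTranspose_apply, Finset.mul_sum]
  rw [Finset.sum_comm]
  refine Finset.sum_congr rfl fun x _ => ?_
  rw [Finset.sum_comm]
  exact Finset.sum_congr rfl fun y _ => Finset.sum_congr rfl fun j _ => by ring

theorem krausMap_single_apply [Fintype n] [DecidableEq n] (M : ι → Matrix n n R) (c : R)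
    (a x b y : n) : krausMap M (single x y c) a b = c * krausCoeff M a x b y := by
  simp [krausMap_apply, single_apply, ite_and]

theorem krausMap_eq_iff_krausCoeff_eq [Fintype n] [DecidableEq n] {M : ι → Matrix n n R}
    {N : κ → Matrix n n R} : krausMap N = krausMap M ↔ krausCoeff N = krausCoeff M := by
  refine ⟨fun h => ?_, fun h => ?_⟩
  · ext a x b y
    simpa only [krausMap_single_apply, one_mul] using congrFun₃ h (single x y 1) a b
  · ext ρ a b
    rw [krausMap_apply, krausMap_apply, h]

theorem sum_conjTranspose_mul_apply [Fintype n] (M : ι → Matrix n n R) (x y : n) :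
    (∑ j, (M j)ᴴ * M j) x y = ∑ a, krausCoeff M a y a x := by
  simp only [krausCoeff, Matrix.sum_apply, mul_apply, conjTranspose_apply]
  rw [Finset.sum_comm]
  exact Finset.sum_congr rfl fun a _ => Finset.sum_congr rfl fun j _ => mul_comm _ _

theorem sum_conjTranspose_mul_eq_of_krausCoeff_eq [Fintype n] {M : ι → Matrix n n R}
    {N : κ → Matrix n n R} (h : krausCoeff N = krausCoeff M) :
    ∑ k, (N k)ᴴ * N k = ∑ j, (M j)ᴴ * M j := by
  ext x y
  rw [sum_conjTranspose_mul_apply, sum_conjTranspose_mul_apply, h]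

theorem krausCoeff_comp_equiv (M : ι → Matrix n n R) (e : κ ≃ ι) :
    krausCoeff (M ∘ e) = krausCoeff M := by
  ext a x b y
  exact e.sum_comp fun j => M j a x * star (M j b y)

theorem krausCoeff_sumElim (A : ι → Matrix n n R) (B : κ → Matrix n n R) :
    krausCoeff (Sum.elim A B) = krausCoeff A + krausCoeff B := by
  ext a x b y
  simp [krausCoeff, Fintype.sum_sum_type]

theorem krausCoeff_diagonal [DecidableEq n] (D : ι → n → R) (a x b y : n) :
    krausCoeff (fun j => diagonal (D j)) a x b y =
      if a = x ∧ b = y then ∑ j, D j a * star (D j b) else 0 := by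
  by_cases h : a = x ∧ b = y
  · simp [krausCoeff, h]
  · simp only [if_neg h, krausCoeff, diagonal_apply]
    rcases not_and_or.1 h with h | h <;> simp [h]

theorem krausCoeff_single [Fintype n] [DecidableEq n] (c : ι × n × n → R) (a x b y : n) :
    krausCoeff (fun p => single p.2.1 p.2.2 (c p)) a x b y =
      if a = b ∧ x = y then ∑ j, c (j, a, x) * star (c (j, a, x)) else 0 := by
  simp only [krausCoeff, single_apply, Fintype.sum_prod_type, ite_and]
  split_ifs <;> simp_all

theorem krausCoeff_covariantKraus [Fintype n] [DecidableEq n] {M : ι → Matrix n n R}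
    (hM : IsCovariantCoeff (krausCoeff M)) : krausCoeff (covariantKraus M) = krausCoeff M := by
  ext a x b y
  simp only [covariantKraus, krausCoeff_sumElim, Pi.add_apply, krausCoeff_diagonal,
    krausCoeff_single]
  by_cases hdiag : a = x ∧ b = y
  · obtain ⟨rfl, rfl⟩ := hdiag
    simp [krausCoeff]
  by_cases hoff : x = y ∧ a = b
  · obtain ⟨rfl, rfl⟩ := hoff
    simp_all [krausCoeff]
  have hC : krausCoeff M a x b y = 0 := not_not.1 fun hC => (hM a x b y hC).elim hdiag hoff
  rw [if_neg hdiag, if_neg fun h => hoff ⟨h.2, h.1⟩, add_zero, hC]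

theorem isCovariantCoeff_of_isDiag_or_single [DecidableEq n] {N : κ → Matrix n n R}
    (hN : ∀ k, (N k).IsDiag ∨ ∃ (c : R) (x y : n), x ≠ y ∧ N k = single x y c) :
    IsCovariantCoeff (krausCoeff N) := by
  intro a x b y hne
  by_contra hpat
  refine hne (Finset.sum_eq_zero fun k _ => ?_)
  rcases hN k with hk | ⟨c, x', y', -, hk⟩
  · by_cases hax : a = x
    · simp [hk (show b ≠ y by tauto)]
    · simp [hk hax]
  · rw [hk, single_apply, single_apply]
    split_ifs <;> simp_all

theorem diagonal_mul_mul_conjTranspose_diagonal_apply [Fintype n] [DecidableEq n] (f : n → R)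
    (A : Matrix n n R) (a b : n) :
    (diagonal f * A * (diagonal f)ᴴ) a b = f a * A a b * star (f b) := by
  rw [diagonal_conjTranspose, mul_diagonal, diagonal_mul]
  rfl

theorem diagonal_mul_single_mul_conjTranspose_diagonal [Fintype n] [DecidableEq n] (f : n → R)
    (x y : n) (c : R) :
    diagonal f * single x y c * (diagonal f)ᴴ = single x y (f x * c * star (f y)) := by
  ext a b
  rw [diagonal_mul_mul_conjTranspose_diagonal_apply, single_apply, single_apply]
  split_ifs with h
  · obtain ⟨rfl, rfl⟩ := h
    rfl
  · simp

end CommSemiring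

theorem diagonal_mem_unitaryGroup_iff [CommRing R] [StarRing R] [Fintype n] [DecidableEq n]
    {f : n → R} : diagonal f ∈ unitaryGroup n R ↔ ∀ i, star (f i) * f i = 1 := by
  rw [mem_unitaryGroup_iff', star_eq_conjTranspose, diagonal_conjTranspose,
    diagonal_mul_diagonal, ← diagonal_one, diagonal_eq_diagonal_iff]
  rfl

theorem eq_and_eq_or_of_forall_phase [DecidableEq n] {a x b y : n}
    (h : ∀ f : n → ℂ, (∀ i, star (f i) * f i = 1) → f x * star (f y) = f a * star (f b)) :
    (a = x ∧ b = y) ∨ (x = y ∧ a = b) := by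
  -- test `h` with the phase `I` at a single site
  have hI : ∀ p : n, ∀ i, star (if i = p then I else 1) * (if i = p then I else 1) = 1 := by
    intro p i
    split_ifs <;> simp
  by_cases hax : a = x
  · subst hax
    have hy := h _ (hI y)
    refine .inl ⟨rfl, ?_⟩
    by_contra hby
    split_ifs at hy <;> norm_num [Complex.ext_iff] at hy <;> simp_all
  · have hx := h _ (hI x)
    have hxy : x = y := by
      by_contra hxy
      split_ifs at hx <;> norm_num [Complex.ext_iff] at hx <;> simp_all
    subst hxy
    have ha := h _ (hI a)
    refine .inr ⟨rfl, ?_⟩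
    by_contra hab
    split_ifs at ha <;> norm_num [Complex.ext_iff] at ha <;> simp_all

section Covariance

variable [Fintype n] [DecidableEq n] [Fintype ι]

def IsDiagCovariant (Φ : Matrix n n ℂ → Matrix n n ℂ) : Prop :=
  ∀ u : Matrix n n ℂ, u.IsDiag → u ∈ unitaryGroup n ℂ → ∀ ρ, Φ (u * ρ * uᴴ) = u * Φ ρ * uᴴ

theorem isDiagCovariant_krausMap_iff (M : ι → Matrix n n ℂ) :
    IsDiagCovariant (krausMap M) ↔ IsCovariantCoeff (krausCoeff M) := by
  constructor
  · intro hM a x b y hC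
    refine eq_and_eq_or_of_forall_phase fun f hf => mul_right_cancel₀ hC ?_
    have h := congrFun₂ (hM (diagonal f) (isDiag_diagonal f) (diagonal_mem_unitaryGroup_iff.2 hf)
      (single x y 1)) a b
    rw [diagonal_mul_single_mul_conjTranspose_diagonal, krausMap_single_apply,
      diagonal_mul_mul_conjTranspose_diagonal_apply, krausMap_single_apply] at h
    linear_combination h
  · intro hM u hu_diag hu ρ
    rw [← hu_diag.diagonal_diag] at hu ⊢
    have hf := diagonal_mem_unitaryGroup_iff.1 hu
    ext a b
    simp only [diagonal_mul_mul_conjTranspose_diagonal_apply, krausMap_apply, Finset.mul_sum,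
      Finset.sum_mul]
    refine Finset.sum_congr rfl fun x _ => Finset.sum_congr rfl fun y _ => ?_
    by_cases hC : krausCoeff M a x b y = 0
    · simp [hC]
    rcases hM a x b y hC with ⟨rfl, rfl⟩ | ⟨rfl, rfl⟩
    · ring
    · linear_combination (ρ x x * krausCoeff M a x a x) * (hf x - hf a)

end Covariance

end Kraus

open Kraus

/-- The channel of a Kraus family is covariant under all diagonal unitaries iff
it admits a Kraus representation in which every Kraus operator is either
diagonal or a scalar multiple of a matrix unit `|x⟩⟨x'|` with `x ≠ x'`. -/
theorem stmt_17 (d n : ℕ) (M : Fin n → Matrix (Fin d) (Fin d) ℂ)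
    (hK : ∑ j, (M j)ᴴ * M j = 1) :
    (∀ u : Matrix (Fin d) (Fin d) ℂ,
        u.IsDiag → u ∈ Matrix.unitaryGroup (Fin d) ℂ →
        ∀ ρ : Matrix (Fin d) (Fin d) ℂ,
          (∑ j, M j * (u * ρ * uᴴ) * (M j)ᴴ) = u * (∑ j, M j * ρ * (M j)ᴴ) * uᴴ) ↔
    (∃ (m : ℕ) (N : Fin m → Matrix (Fin d) (Fin d) ℂ),
        (∑ k, (N k)ᴴ * N k = 1) ∧
        (∀ ρ : Matrix (Fin d) (Fin d) ℂ,
          ∑ k, N k * ρ * (N k)ᴴ = ∑ j, M j * ρ * (M j)ᴴ) ∧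
        (∀ k, (N k).IsDiag ∨
          ∃ (b : ℂ) (x x' : Fin d), x ≠ x' ∧ N k = Matrix.single x x' b)) := by
  change IsDiagCovariant (krausMap M) ↔ _
  constructor
  · intro hM
    let e := Fintype.equivFin (Fin n ⊕ Fin n × Fin d × Fin d)
    have hcoeff : krausCoeff (covariantKraus M ∘ e.symm) = krausCoeff M := by
      rw [krausCoeff_comp_equiv, krausCoeff_covariantKraus ((isDiagCovariant_krausMap_iff M).1 hM)]
    exact ⟨_, _, (sum_conjTranspose_mul_eq_of_krausCoeff_eq hcoeff).trans hK,
      congrFun (krausMap_eq_iff_krausCoeff_eq.2 hcoeff),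
      fun k => covariantKraus_isDiag_or_single M _⟩
  · rintro ⟨m, N, -, hNM, hN⟩
    rw [isDiagCovariant_krausMap_iff, ← krausMap_eq_iff_krausCoeff_eq.1 (funext hNM)]
    exact isCovariantCoeff_of_isDiag_or_single hN
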